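/- Let (l≺, r≺, l≻, r≻, l∗, r∗, β₁, β₂, V) be a bimodule of a noncommutative BiHom-pre-Poisson algebra (A, ≺, ≻, ∗, α₁, α₂). Then A ⊕ V with (x+u)≺'(y+v) = x≺y + l≺(x)v + r≺(y)u, (x+u)≻'(y+v) = x≻y + l≻(x)v + r≻(y)u, (x+u)∗'(y+v) = x∗y + l∗(x)v + r∗(y)u, and structure maps α₁⊕β₁, α₂⊕β₂, is a noncommutative BiHom-pre-Poisson algebra. -/

import Mathlib

universe u

section Defs
variable {A : Type*} {V : Type*} [AddCommGroup A] [AddCommGroup V]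

/-- Commuting pair of maps. -/
def BHComm2 (a1 a2 : A → A) : Prop := ∀ x, a1 (a2 x) = a2 (a1 x)

/-- Multiplicativity of a map with respect to a binary operation. -/
def BHMultip (m : A → A → A) (a : A → A) : Prop := ∀ x y, a (m x y) = m (a x) (a y)

/-- BiHom-associative algebra. -/
def BHAssocAlg (m : A → A → A) (a1 a2 : A → A) : Prop :=
  BHComm2 a1 a2 ∧ BHMultip m a1 ∧ BHMultip m a2 ∧
  ∀ x y z, m (a1 x) (m y z) = m (m x y) (a2 z)

/-- Bimodule of a BiHom-associative algebra. -/
def BHAssocBimod (m : A → A → A) (a1 a2 : A → A)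
    (l r : A → V → V) (b1 b2 : V → V) : Prop :=
  BHComm2 b1 b2 ∧
  (∀ x y v, l (m x y) (b2 v) = l (a1 x) (l y v)) ∧
  (∀ x y v, r (m x y) (b1 v) = r (a2 y) (r x v)) ∧
  (∀ x y v, l (a1 x) (r y v) = r (a2 y) (l x v)) ∧
  (∀ x v, b1 (l x v) = l (a1 x) (b1 v)) ∧
  (∀ x v, b1 (r x v) = r (a1 x) (b1 v)) ∧
  (∀ x v, b2 (l x v) = l (a2 x) (b2 v)) ∧
  (∀ x v, b2 (r x v) = r (a2 x) (b2 v))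

/-- BiHom-Lie algebra. -/
def BHLieAlg (br : A → A → A) (a1 a2 : A → A) : Prop :=
  BHComm2 a1 a2 ∧ BHMultip br a1 ∧ BHMultip br a2 ∧
  (∀ x y, br (a2 x) (a1 y) = - br (a2 y) (a1 x)) ∧
  (∀ x y z,
    br (a2 (a2 x)) (br (a2 y) (a1 z)) + br (a2 (a2 z)) (br (a2 x) (a1 y)) +
      br (a2 (a2 y)) (br (a2 z) (a1 x)) = 0)

/-- Representation of a BiHom-Lie algebra. -/
def BHLieRep (br : A → A → A) (a1 a2 : A → A) (ρ : A → V → V) (b1 b2 : V → V) : Prop :=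
  BHComm2 b1 b2 ∧
  (∀ x y v, ρ (br (a2 x) y) (b2 v) = ρ (a1 (a2 x)) (ρ y v) - ρ (a2 y) (ρ (a1 x) v)) ∧
  (∀ x v, b1 (ρ x v) = ρ (a1 x) (b1 v)) ∧
  (∀ x v, b2 (ρ x v) = ρ (a2 x) (b2 v))

/-- BiHom-Leibniz identity. -/
def BHLeibniz (m br : A → A → A) (a1 a2 : A → A) : Prop :=
  ∀ x y z, br (a1 (a2 x)) (m y z) = m (br (a2 x) y) (a2 z) + m (a2 y) (br (a1 x) z)

/-- Noncommutative BiHom-Poisson algebra. -/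
def BHNCPoisson (m br : A → A → A) (a1 a2 : A → A) : Prop :=
  BHAssocAlg m a1 a2 ∧ BHLieAlg br a1 a2 ∧ BHLeibniz m br a1 a2

/-- Representation of a noncommutative BiHom-Poisson algebra. -/
def BHPoissonRep (m br : A → A → A) (a1 a2 : A → A)
    (l r ρ : A → V → V) (b1 b2 : V → V) : Prop :=
  BHAssocBimod m a1 a2 l r b1 b2 ∧ BHLieRep br a1 a2 ρ b1 b2 ∧
  (∀ x y v, l (br (a2 x) y) (b2 v) = ρ (a1 (a2 x)) (l y v) - l (a2 y) (ρ (a1 x) v)) ∧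
  (∀ x y v, r (br (a1 x) y) (b2 v) = ρ (a1 (a2 x)) (r y v) - r (a2 y) (ρ (a2 x) v)) ∧
  (∀ x y v, ρ (m x y) (b1 (b2 v)) = l (a1 x) (ρ y (b1 v)) + r (a1 y) (ρ x (b2 v)))

/-- BiHom-pre-Lie algebra. -/
def BHPreLieAlg (st : A → A → A) (a1 a2 : A → A) : Prop :=
  BHComm2 a1 a2 ∧ BHMultip st a1 ∧ BHMultip st a2 ∧
  ∀ x y z,
    st (st (a2 x) (a1 y)) (a2 z) - st (a1 (a2 x)) (st (a1 y) z) =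
      st (st (a2 y) (a1 x)) (a2 z) - st (a1 (a2 y)) (st (a1 x) z)

/-- Bimodule of a BiHom-pre-Lie algebra. -/
def BHPreLieBimod (st : A → A → A) (a1 a2 : A → A)
    (lst rst : A → V → V) (b1 b2 : V → V) : Prop :=
  BHComm2 b1 b2 ∧
  (∀ x y v, lst (st (a2 x) (a1 y) - st (a2 y) (a1 x)) (b2 v) =
      lst (a1 (a2 x)) (lst (a1 y) v) - lst (a1 (a2 y)) (lst (a1 x) v)) ∧
  (∀ x y v, rst (a2 y) (lst (a2 x) (b1 v) - rst (a1 x) (b2 v)) =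
      lst (a1 (a2 x)) (rst y (b1 v)) - rst (st (a1 x) y) (b1 (b2 v))) ∧
  (∀ x v, b1 (lst x v) = lst (a1 x) (b1 v)) ∧
  (∀ x v, b1 (rst x v) = rst (a1 x) (b1 v)) ∧
  (∀ x v, b2 (lst x v) = lst (a2 x) (b2 v)) ∧
  (∀ x v, b2 (rst x v) = rst (a2 x) (b2 v))

/-- BiHom-dendriform algebra. -/
def BHDendAlg (p s : A → A → A) (a1 a2 : A → A) : Prop :=
  BHComm2 a1 a2 ∧ BHMultip p a1 ∧ BHMultip p a2 ∧ BHMultip s a1 ∧ BHMultip s a2 ∧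
  (∀ x y z, p (p x y) (a2 z) = p (a1 x) (p y z + s y z)) ∧
  (∀ x y z, p (s x y) (a2 z) = s (a1 x) (p y z)) ∧
  (∀ x y z, s (a1 x) (s y z) = s (p x y + s x y) (a2 z))

/-- Bimodule of a BiHom-dendriform algebra. -/
def BHDendBimod (p s : A → A → A) (a1 a2 : A → A)
    (lp rp ls rs : A → V → V) (b1 b2 : V → V) : Prop :=
  BHComm2 b1 b2 ∧
  (∀ x y v, lp (p x y) (b2 v) = lp (a1 x) (lp y v + ls y v)) ∧
  (∀ x y v, rp (a2 x) (lp y v) = lp (a1 y) (rp x v + rs x v)) ∧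
  (∀ x y v, rp (a2 y) (rp x v) = rp (p x y + s x y) (b1 v)) ∧
  (∀ x y v, lp (s x y) (b2 v) = ls (a1 x) (lp y v)) ∧
  (∀ x y v, rp (a2 x) (ls y v) = ls (a1 y) (rp x v)) ∧
  (∀ x y v, rp (a2 x) (rs y v) = rs (p y x) (b1 v)) ∧
  (∀ x y v, ls (p x y + s x y) (b2 v) = ls (a1 x) (ls y v)) ∧
  (∀ x y v, rs (a2 x) (lp y v + ls y v) = ls (a1 y) (rs x v)) ∧
  (∀ x y v, rs (a2 x) (rp y v + rs y v) = rs (s y x) (b1 v)) ∧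
  (∀ x v, b1 (lp x v) = lp (a1 x) (b1 v)) ∧
  (∀ x v, b1 (rp x v) = rp (a1 x) (b1 v)) ∧
  (∀ x v, b2 (lp x v) = lp (a2 x) (b2 v)) ∧
  (∀ x v, b2 (rp x v) = rp (a2 x) (b2 v)) ∧
  (∀ x v, b1 (ls x v) = ls (a1 x) (b1 v)) ∧
  (∀ x v, b1 (rs x v) = rs (a1 x) (b1 v)) ∧
  (∀ x v, b2 (ls x v) = ls (a2 x) (b2 v)) ∧
  (∀ x v, b2 (rs x v) = rs (a2 x) (b2 v))

/-- The three compatibility conditions of a noncommutative BiHom-pre-Poisson algebra. -/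
def BHPPCompat (p s st : A → A → A) (a1 a2 : A → A) : Prop :=
  (∀ x y z, p (st (a2 x) (a1 y) - st (a2 y) (a1 x)) (a2 z) =
      st (a1 (a2 x)) (p (a1 y) z) - p (a1 (a2 y)) (st (a1 x) z)) ∧
  (∀ x y z, s (a2 x) (st (a1 (a2 y)) (a1 z) - st (a2 z) (a1 (a1 y))) =
      st (a1 (a2 (a2 y))) (s x (a1 z)) - s (st (a2 (a2 y)) x) (a1 (a2 z))) ∧
  (∀ x y z, st (p (a2 x) (a1 y) + s (a2 x) (a1 y)) (a2 z) =
      s (st (a2 x) (a1 z)) (a2 y) + p (a1 (a2 x)) (st (a1 y) z))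

/-- Noncommutative BiHom-pre-Poisson algebra. -/
def BHPrePoisson (p s st : A → A → A) (a1 a2 : A → A) : Prop :=
  BHDendAlg p s a1 a2 ∧ BHPreLieAlg st a1 a2 ∧ BHPPCompat p s st a1 a2

/-- Bimodule of a noncommutative BiHom-pre-Poisson algebra. -/
def BHPrePoissonBimod (p s st : A → A → A) (a1 a2 : A → A)
    (lp rp ls rs lst rst : A → V → V) (b1 b2 : V → V) : Prop :=
  BHPreLieBimod st a1 a2 lst rst b1 b2 ∧
  BHDendBimod p s a1 a2 lp rp ls rs b1 b2 ∧
  (∀ x y v, lp (st (a2 x) (a1 y) - st (a2 y) (a1 x)) (b2 v) =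
      lst (a1 (a2 x)) (lp (a1 y) v) - lp (a1 (a2 y)) (lst (a1 x) v)) ∧
  (∀ x y v, rp (a2 x) (lst (a2 y) (b1 v) - rst (a1 y) (b2 v)) =
      lst (a1 (a2 y)) (rp x (b1 v)) - rp (st (a1 y) x) (b1 (b2 v))) ∧
  (∀ x y v, - rp (a2 x) (lst (a2 y) (b1 v) - rst (a1 y) (b2 v)) =
      rst (p (a1 y) x) (b1 (b2 v)) - lp (a1 (a2 y)) (rst x (b1 v))) ∧
  (∀ x y v, ls (a2 x) (lst (a1 (a2 y)) (b1 v) - rst (a1 (a1 y)) (b2 v)) =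
      lst (a1 (a2 (a2 y))) (ls x (b1 v)) - ls (st (a2 (a2 y)) x) (b1 (b2 v))) ∧
  (∀ x y v, rs (st (a2 (a1 x)) (a1 y) - st (a2 y) (a1 (a1 x))) (b2 v) =
      lst (a1 (a2 (a2 x))) (rs (a1 y) v) - rs (a1 (a2 y)) (lst (a2 (a2 x)) v)) ∧
  (∀ x y v, - ls (a2 x) (lst (a2 y) (b1 (b1 v)) - rst (a1 y) (b2 (b1 v))) =
      rst (s x (a1 y)) (b1 (b2 (b2 v))) - rs (a1 (a2 y)) (rst x (b2 (b2 v)))) ∧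
  (∀ x y v, lst (p (a2 x) (a1 y) + s (a2 x) (a1 y)) (b2 v) =
      rs (a2 y) (lst (a2 x) (b1 v)) + lp (a1 (a2 x)) (lst (a1 y) v)) ∧
  (∀ x y v, rst (a2 x) (lp (a2 y) (b1 v) + ls (a2 y) (b1 v)) =
      ls (st (a2 y) (a1 x)) (b2 v) + lp (a1 (a2 y)) (rst x (b1 v))) ∧
  (∀ x y v, rst (a2 x) (rp (a1 y) (b2 v) + rs (a1 y) (b2 v)) =
      rs (a2 y) (rst (a1 x) (b2 v)) + rp (st (a1 y) x) (b1 (b2 v)))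

end Defs

/-!
On `A × V` with the semidirect operations, the `A`-component of each axiom is the same axiom in
`A`. The `V`-component is additive in the `V`-entries of the arguments and each of its terms
involves exactly one of them, so it splits into one identity per argument lying in `V`; these are
precisely the bimodule axioms.
-/

section Semidirect
variable {R A V : Type*}

theorem BHComm2.prodMap {a1 a2 : A → A} {b1 b2 : V → V} (ha : BHComm2 a1 a2)
    (hb : BHComm2 b1 b2) : BHComm2 (Prod.map a1 b1) (Prod.map a2 b2) :=
  fun q => Prod.ext (ha q.1) (hb q.2)

variable [CommSemiring R] [AddCommGroup A] [Module R A] [AddCommGroup V] [Module R V]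

def semidirectMul (m : A → A → A) (l r : A →ₗ[R] V →ₗ[R] V) (q w : A × V) : A × V :=
  (m q.1 w.1, l q.1 w.2 + r w.1 q.2)

theorem BHMultip.semidirect {m : A → A → A} {a : A → A} {l r : A →ₗ[R] V →ₗ[R] V}
    {b : V →ₗ[R] V}
    (hm : BHMultip m a) (hl : ∀ x v, b (l x v) = l (a x) (b v))
    (hr : ∀ x v, b (r x v) = r (a x) (b v)) :
    BHMultip (semidirectMul m l r) (Prod.map a b) := by
  intro q w
  refine Prod.ext (hm q.1 w.1) ?_
  simp only [semidirectMul, Prod.map_fst, Prod.map_snd, map_add, hl, hr]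

variable {p s st : A → A → A} {a1 a2 : A → A}
  {lp rp ls rs lst rst : A →ₗ[R] V →ₗ[R] V} {b1 b2 : V →ₗ[R] V}

theorem BHDendAlg.semidirect (h : BHDendAlg p s a1 a2)
    (hV : BHDendBimod p s a1 a2 (lp · ·) (rp · ·) (ls · ·) (rs · ·) b1 b2) :
    BHDendAlg (semidirectMul p lp rp) (semidirectMul s ls rs)
      (Prod.map a1 b1) (Prod.map a2 b2) := by
  obtain ⟨hc, hp1, hp2, hs1, hs2, hpp, hsp, hss⟩ := h
  obtain ⟨hbc, hd1, hd2, hd3, hd4, hd5, hd6, hd7, hd8, hd9,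
    hlp1, hrp1, hlp2, hrp2, hls1, hrs1, hls2, hrs2⟩ := hV
  simp only [map_add, LinearMap.add_apply] at hd1 hd2 hd3 hd4 hd5 hd6 hd7 hd8 hd9
  refine ⟨hc.prodMap hbc, hp1.semidirect hlp1 hrp1, hp2.semidirect hlp2 hrp2,
    hs1.semidirect hls1 hrs1, hs2.semidirect hls2 hrs2,
    fun x y z => Prod.ext (hpp x.1 y.1 z.1) ?_, fun x y z => Prod.ext (hsp x.1 y.1 z.1) ?_,
    fun x y z => Prod.ext (hss x.1 y.1 z.1) ?_⟩ <;>
    simp only [semidirectMul, Prod.map_fst, Prod.map_snd, Prod.fst_add, Prod.snd_add, map_add,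
      LinearMap.add_apply]
  · linear_combination (norm := module) hd1 x.1 y.1 z.2 + hd2 z.1 x.1 y.2 + hd3 y.1 z.1 x.2
  · linear_combination (norm := module) hd4 x.1 y.1 z.2 + hd5 z.1 x.1 y.2 + hd6 z.1 y.1 x.2
  · linear_combination (norm := module) -hd7 x.1 y.1 z.2 - hd8 z.1 x.1 y.2 - hd9 z.1 y.1 x.2

theorem BHPreLieAlg.semidirect (h : BHPreLieAlg st a1 a2)
    (hV : BHPreLieBimod st a1 a2 (lst · ·) (rst · ·) b1 b2) :
    BHPreLieAlg (semidirectMul st lst rst) (Prod.map a1 b1) (Prod.map a2 b2) := by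
  obtain ⟨hc, hm1, hm2, hpl⟩ := h
  obtain ⟨hbc, hl, hr, hlst1, hrst1, hlst2, hrst2⟩ := hV
  simp only [map_sub, LinearMap.sub_apply] at hl hr
  refine ⟨hc.prodMap hbc, hm1.semidirect hlst1 hrst1, hm2.semidirect hlst2 hrst2,
    fun x y z => Prod.ext (hpl x.1 y.1 z.1) ?_⟩
  simp only [semidirectMul, Prod.map_fst, Prod.map_snd, Prod.snd_sub, map_add]
  linear_combination (norm := module) hl x.1 y.1 z.2 + hr x.1 z.1 y.2 - hr y.1 z.1 x.2

theorem BHPPCompat.semidirect (hc : BHComm2 a1 a2) (h : BHPPCompat p s st a1 a2)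
    (hV : BHPrePoissonBimod p s st a1 a2
      (lp · ·) (rp · ·) (ls · ·) (rs · ·) (lst · ·) (rst · ·) b1 b2) :
    BHPPCompat (semidirectMul p lp rp) (semidirectMul s ls rs) (semidirectMul st lst rst)
      (Prod.map a1 b1) (Prod.map a2 b2) := by
  obtain ⟨hc1, hc2, hc3⟩ := h
  obtain ⟨⟨hbc, -⟩, -, h1, h2, h3, h4, h5, h6, h7, h8, h9⟩ := hV
  -- the axioms compose the structure maps in both orders; normalize to one
  have ha : ∀ x, a1 (a2 x) = a2 (a1 x) := hc
  have hb : ∀ v, b1 (b2 v) = b2 (b1 v) := hbc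
  simp only [map_add, map_sub, LinearMap.add_apply, LinearMap.sub_apply, ha, hb]
    at h1 h2 h3 h4 h5 h6 h7 h8 h9
  refine ⟨fun x y z => Prod.ext (hc1 x.1 y.1 z.1) ?_, fun x y z => Prod.ext (hc2 x.1 y.1 z.1) ?_,
    fun x y z => Prod.ext (hc3 x.1 y.1 z.1) ?_⟩ <;>
    simp only [semidirectMul, Prod.map_fst, Prod.map_snd, Prod.fst_add, Prod.snd_add, Prod.fst_sub,
      Prod.snd_sub, map_add, map_sub, LinearMap.add_apply, LinearMap.sub_apply, ha, hb]
  · linear_combination (norm := module) h1 x.1 y.1 z.2 + h2 z.1 x.1 y.2 + h3 z.1 y.1 x.2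
  · linear_combination (norm := module) h4 x.1 y.1 z.2 + h5 y.1 z.1 x.2 + h6 x.1 z.1 y.2
  · linear_combination (norm := module) h7 x.1 y.1 z.2 + h8 z.1 x.1 y.2 + h9 z.1 y.1 x.2

theorem BHPrePoisson.semidirect (h : BHPrePoisson p s st a1 a2)
    (hV : BHPrePoissonBimod p s st a1 a2
      (lp · ·) (rp · ·) (ls · ·) (rs · ·) (lst · ·) (rst · ·) b1 b2) :
    BHPrePoisson (semidirectMul p lp rp) (semidirectMul s ls rs) (semidirectMul st lst rst)
      (Prod.map a1 b1) (Prod.map a2 b2) :=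
  ⟨h.1.semidirect hV.2.1, h.2.1.semidirect hV.1, h.2.2.semidirect h.1.1 hV⟩

end Semidirect

theorem stmt_13 {K A V : Type*} [Field K] [AddCommGroup A] [Module K A]
    [AddCommGroup V] [Module K V]
    (p s st : A →ₗ[K] A →ₗ[K] A) (a1 a2 : A →ₗ[K] A)
    (lp rp ls rs lst rst : A →ₗ[K] V →ₗ[K] V) (b1 b2 : V →ₗ[K] V)
    (hPP : BHPrePoisson (fun x y => p x y) (fun x y => s x y) (fun x y => st x y) (fun x => a1 x) (fun x => a2 x))
    (hbim : BHPrePoissonBimod (fun x y => p x y) (fun x y => s x y) (fun x y => st x y) (fun x => a1 x) (fun x => a2 x)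
      (fun x v => lp x v) (fun x v => rp x v) (fun x v => ls x v) (fun x v => rs x v) (fun x v => lst x v) (fun x v => rst x v)
      (fun v => b1 v) (fun v => b2 v)) :
    BHPrePoisson
      (fun q w : A × V => (p q.1 w.1, lp q.1 w.2 + rp w.1 q.2))
      (fun q w : A × V => (s q.1 w.1, ls q.1 w.2 + rs w.1 q.2))
      (fun q w : A × V => (st q.1 w.1, lst q.1 w.2 + rst w.1 q.2))
      (fun q => (a1 q.1, b1 q.2)) (fun q => (a2 q.1, b2 q.2)) :=
  hPP.semidirect hbim
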